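/- For a Bernoulli random variable B_θ with success probability p(θ) ∈ (0,1), where p is differentiable, and any function f : {0,1} → ℝ, the smoothed perturbation analysis identity holds: d/dθ E[f(B_θ)] = E[w(B_θ) · (f(1 − B_θ) − f(B_θ))], where w(1) = max(0, −p'(θ))/p(θ) and w(0) = max(0, p'(θ))/(1 − p(θ)). -/

import Mathlib

/-!
The mean `p f(1) + (1 - p) f(0)` is affine in `p`, so its derivative is `p' (f(1) - f(0))`.
Splitting `p' = max(0, p') - max(0, -p')` and cancelling the probabilities `p` and `1 - p`
against the denominators of the weights turns this into the weighted expectation.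
-/

theorem deriv_bernoulli_mean (p : ℝ → ℝ) (θ a b : ℝ) :
    deriv (fun t => p t * a + (1 - p t) * b) θ = deriv p θ * (a - b) := by
  have affine : (fun t => p t * a + (1 - p t) * b) = fun t => p t * (a - b) + b := by
    funext t
    ring
  rw [affine, deriv_add_const, deriv_mul_const_field]

theorem mul_max_div_add_mul_max_div (x q a b : ℝ) (hx : x ≠ 0) (hx' : 1 - x ≠ 0) :
    x * (max 0 (-q) / x * (b - a)) + (1 - x) * (max 0 q / (1 - x) * (a - b)) = q * (a - b) :=
  calc x * (max 0 (-q) / x * (b - a)) + (1 - x) * (max 0 q / (1 - x) * (a - b))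
      = (max 0 q - max 0 (-q)) * (a - b) := by field_simp; ring
    _ = q * (a - b) := by rw [max_comm, max_comm 0, max_zero_sub_max_neg_zero_eq_self]

theorem stmt2_general (p : ℝ → ℝ) (θ : ℝ)
    (h0 : 0 < p θ) (h1 : p θ < 1) (f : Bool → ℝ) :
    deriv (fun t => p t * f true + (1 - p t) * f false) θ
      = p θ * (max 0 (-(deriv p θ)) / p θ * (f false - f true))
        + (1 - p θ) * (max 0 (deriv p θ) / (1 - p θ) * (f true - f false)) := by
  rw [deriv_bernoulli_mean,
    mul_max_div_add_mul_max_div _ _ _ _ h0.ne' (sub_ne_zero.2 h1.ne')]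

/-- SPA identity for a Bernoulli random variable `B_θ` with success probability `p θ`:
`d/dθ E[f(B_θ)] = E[w(B_θ)·(f(1−B_θ) − f(B_θ))]`, with
`w(1) = max(0, −p')/p` and `w(0) = max(0, p')/(1−p)`. -/
theorem stmt2 (p : ℝ → ℝ) (θ : ℝ) (hp : DifferentiableAt ℝ p θ)
    (h0 : 0 < p θ) (h1 : p θ < 1) (f : Bool → ℝ) :
    deriv (fun t => p t * f true + (1 - p t) * f false) θ
      = p θ * (max 0 (-(deriv p θ)) / p θ * (f false - f true))
        + (1 - p θ) * (max 0 (deriv p θ) / (1 - p θ) * (f true - f false)) :=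
  stmt2_general p θ h0 h1 f
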